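/- The trigonometric Dunkl operators D_i^{trig} := X_i D_i − k∑_{j<i} s_{ij}, where D_i = ħ∂_i − ∑_{j≠i} (k/(X_i − X_j))(1 − s_{ij}) are the rational Dunkl operators acting on ℂ[X_1^{±1},…,X_N^{±1}] together with the S_N-action, pairwise commute: [D_i^{trig}, D_m^{trig}] = 0 for all i, m. -/

import Mathlib

/- STATEMENT 5: The trigonometric Dunkl operators
D_i^{trig} = X_i D_i − k ∑_{j<i} s_{ij}, where
D_i = hbar∂_i − ∑_{j≠i} (k/(X_i − X_j))(1 − s_{ij}) are the rational Dunkl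
operators, pairwise commute.

The operators act on the field K of rational functions in X_1,…,X_N; the
partial derivatives ∂_i are characterized as ℂ-linear derivations of K with
∂_i X_j = δ_{ij}, and s_{ij} as the ℂ-algebra automorphisms of K swapping
X_i and X_j.  (Such operators preserve ℂ[X_1^{±1},…,X_N^{±1}] ⊂ K.) -/

noncomputable section

open MvPolynomial

variable (N : ℕ)

abbrev RatField (N : ℕ) := FractionRing (MvPolynomial (Fin N) ℂ)

/-- the coordinate X_i as an element of the rational function field -/
noncomputable def Xc {N : ℕ} (i : Fin N) : RatField N :=
  algebraMap (MvPolynomial (Fin N) ℂ) (RatField N) (X i)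

/-- the rational Dunkl operator D_i = hbar∂_i − ∑_{j≠i} (k/(X_i−X_j))(1 − s_{ij}) -/
noncomputable def Drat {N : ℕ} (hbar k : ℂ) (pd : Fin N → (RatField N →ₗ[ℂ] RatField N))
    (S : Fin N → Fin N → (RatField N ≃ₐ[ℂ] RatField N)) (i : Fin N)
    (F : RatField N) : RatField N :=
  (algebraMap ℂ (RatField N) hbar) * pd i F -
    ∑ j ∈ Finset.univ.erase i,
      (algebraMap ℂ (RatField N) k) * (Xc i - Xc j)⁻¹ * (F - S i j F)

/-- the trigonometric Dunkl operator D_i^{trig} = X_i D_i − k ∑_{j<i} s_{ij} -/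
noncomputable def Dtrig {N : ℕ} (hbar k : ℂ) (pd : Fin N → (RatField N →ₗ[ℂ] RatField N))
    (S : Fin N → Fin N → (RatField N ≃ₐ[ℂ] RatField N)) (i : Fin N)
    (F : RatField N) : RatField N :=
  Xc i * Drat hbar k pd S i F -
    ∑ j ∈ Finset.univ.filter (fun j => j < i),
      (algebraMap ℂ (RatField N) k) * S i j F

/-!
Write `D_i = ħ ∂_i - A_i` with `A_i = ∑_{j ≠ i} T_ij`, `T_ij = k (X_i - X_j)⁻¹ (1 - s_ij)`.
The rational operators commute: `[∂_i, ∂_m] = 0` because both sides are derivations agreeing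
on the generators; `[∂_i, A_m] = [∂_i, T_mi] = [∂_m, T_im] = [∂_m, A_i]`, as `∂_i` commutes
with every `T_ml` with `l ≠ i`; and in `[A_i, A_m] = ∑ [T_ij, T_ml]` the pairs with disjoint
indices commute, `T_im T_mi = 0` since the image of `T_mi` is `s_im`-invariant, and the
remaining terms cancel in triples `{i, m, t}`.

For the trigonometric operators write `D_i^trig = X_i D_i - J_i` with the Jucys–Murphy
element `J_i = k ∑_{j < i} s_ij`. From `[D_i, X_m] = k s_im` and `s_ab D_l = D_{s_ab l} s_ab`
one gets, for `i < m`, `[X_i D_i, X_m D_m] = [X_i D_i, J_m] = k (X_i D_i - X_m D_m) s_im`,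
while `J_i` commutes with `X_m D_m` and with `J_m`.
-/

namespace Dunkl

variable {N : ℕ}

open Equiv

theorem Xc_injective : Function.Injective (Xc (N := N)) := fun _ _ h =>
  X_injective (IsFractionRing.injective (MvPolynomial (Fin N) ℂ) (RatField N) h)

theorem Xc_sub_Xc_ne_zero {i j : Fin N} (h : i ≠ j) : Xc i - Xc j ≠ 0 :=
  sub_ne_zero.mpr (Xc_injective.ne h)

theorem algHom_ext_Xc {f g : RatField N →ₐ[ℂ] RatField N} (h : ∀ n, f (Xc n) = g (Xc n)) :
    f = g :=
  IsLocalization.algHom_ext (nonZeroDivisors _) (MvPolynomial.algHom_ext h)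

theorem _root_.Derivation.ext_of_isFractionRing {R A K : Type*} [CommRing R] [CommRing A]
    [Field K] [Algebra R A] [Algebra A K] [IsFractionRing A K] [Algebra R K]
    [IsScalarTower R A K] {D₁ D₂ : Derivation R K K}
    (h : ∀ a, D₁ (algebraMap A K a) = D₂ (algebraMap A K a)) : D₁ = D₂ := by
  ext x
  obtain ⟨a, b, -, rfl⟩ := IsFractionRing.div_surjective (A := A) x
  simp only [Derivation.leibniz_div, h]

theorem derivation_ext_Xc {D₁ D₂ : Derivation ℂ (RatField N) (RatField N)}
    (h : ∀ n, D₁ (Xc n) = D₂ (Xc n)) : D₁ = D₂ :=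
  Derivation.ext_of_isFractionRing (A := MvPolynomial (Fin N) ℂ) fun p =>
    congr($(MvPolynomial.derivation_ext (D₁ := D₁.compAlgebraMap (MvPolynomial (Fin N) ℂ))
      (D₂ := D₂.compAlgebraMap (MvPolynomial (Fin N) ℂ)) h) p)

def _root_.Derivation.conjAlgEquiv {R A : Type*} [CommRing R] [CommRing A] [Algebra R A]
    (e : A ≃ₐ[R] A) (D : Derivation R A A) : Derivation R A A :=
  Derivation.mk' (e.toLinearMap ∘ₗ D.toLinearMap ∘ₗ e.symm.toLinearMap) fun a b => by
    simp [Derivation.leibniz]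

@[simp]
theorem _root_.Derivation.conjAlgEquiv_apply {R A : Type*} [CommRing R] [CommRing A] [Algebra R A]
    (e : A ≃ₐ[R] A) (D : Derivation R A A) (a : A) : D.conjAlgEquiv e a = e (D (e.symm a)) :=
  rfl

theorem inv_Xc_sub_comm (a b : Fin N) : (Xc a - Xc b)⁻¹ = -(Xc b - Xc a)⁻¹ := by
  rw [← inv_neg, neg_sub]

section Swap

variable {S : Fin N → Fin N → (RatField N ≃ₐ[ℂ] RatField N)}
  (hS : ∀ i j m : Fin N, S i j (Xc m) = Xc (swap i j m))
include hS

theorem S_comm (a b : Fin N) : S a b = S b a :=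
  AlgEquiv.coe_toAlgHom_injective <| algHom_ext_Xc fun n => by simp [hS, swap_comm]

theorem S_S_self (a b : Fin N) (F : RatField N) : S a b (S a b F) = F :=
  congr($(algHom_ext_Xc (f := (S a b : RatField N →ₐ[ℂ] RatField N).comp (S a b))
    (g := AlgHom.id ℂ _) fun n => by simp [hS]) F)

theorem S_S (a b i j : Fin N) (F : RatField N) :
    S a b (S i j F) = S (swap a b i) (swap a b j) (S a b F) :=
  congr($(algHom_ext_Xc (f := (S a b : RatField N →ₐ[ℂ] RatField N).comp (S i j))
    (g := (S (swap a b i) (swap a b j) : RatField N →ₐ[ℂ] RatField N).comp (S a b))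
    fun n => by simp [hS, swap_apply_apply, Perm.mul_apply]) F)

theorem S_symm_apply (a b : Fin N) (F : RatField N) : (S a b).symm F = S a b F :=
  (S a b).symm_apply_eq.mpr (S_S_self hS a b F).symm

theorem S_inv_Xc_sub (a b u v : Fin N) :
    S a b (Xc u - Xc v)⁻¹ = (Xc (swap a b u) - Xc (swap a b v))⁻¹ := by
  rw [map_inv₀, map_sub, hS, hS]

end Swap

section Partial

variable {pd : Fin N → (RatField N →ₗ[ℂ] RatField N)}
  (hLeib : ∀ i, ∀ a b : RatField N, pd i (a * b) = a * pd i b + pd i a * b)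
include hLeib

def partialDerivation (i : Fin N) : Derivation ℂ (RatField N) (RatField N) :=
  Derivation.mk' (pd i) fun a b => by rw [hLeib, smul_eq_mul, smul_eq_mul, mul_comm b]

@[simp]
theorem partialDerivation_apply (i : Fin N) (F : RatField N) :
    partialDerivation hLeib i F = pd i F :=
  rfl

theorem pd_algebraMap (i : Fin N) (t : ℂ) : pd i (algebraMap ℂ (RatField N) t) = 0 :=
  (partialDerivation hLeib i).map_algebraMap t

theorem pd_inv (i : Fin N) (a : RatField N) : pd i a⁻¹ = -(a⁻¹ ^ 2 * pd i a) := by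
  simpa using (partialDerivation hLeib i).leibniz_inv a

variable (hpdX : ∀ i j : Fin N, pd i (Xc j) = if i = j then 1 else 0)
include hpdX

theorem pd_pd_comm (i m : Fin N) (F : RatField N) : pd i (pd m F) = pd m (pd i F) := by
  have pd_one (j : Fin N) : pd j 1 = 0 := (partialDerivation hLeib j).map_one_eq_zero
  have h : ⁅partialDerivation hLeib i, partialDerivation hLeib m⁆ = 0 :=
    derivation_ext_Xc fun n => by
      simp only [Derivation.commutator_apply, partialDerivation_apply, hpdX]
      split_ifs <;> simp [pd_one]
  simpa [Derivation.commutator_apply, sub_eq_zero] using congr($h F)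

variable {S : Fin N → Fin N → (RatField N ≃ₐ[ℂ] RatField N)}
  (hS : ∀ i j m : Fin N, S i j (Xc m) = Xc (swap i j m))
include hS

theorem S_pd (a b l : Fin N) (F : RatField N) : S a b (pd l F) = pd (swap a b l) (S a b F) := by
  have h : (partialDerivation hLeib l).conjAlgEquiv (S a b)
      = partialDerivation hLeib (swap a b l) :=
    derivation_ext_Xc fun n => by simp [S_symm_apply hS, hS, hpdX, swap_apply_eq_iff]
  simpa [S_symm_apply hS, S_S_self hS] using congr($h (S a b F))

end Partial

section Rational

variable (hbar k : ℂ) (pd : Fin N → (RatField N →ₗ[ℂ] RatField N))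
  (S : Fin N → Fin N → (RatField N ≃ₐ[ℂ] RatField N))

def dunklTerm (i j : Fin N) : Module.End ℂ (RatField N) :=
  LinearMap.mulLeft ℂ (algebraMap ℂ (RatField N) k * (Xc i - Xc j)⁻¹) ∘ₗ
    (LinearMap.id - (S i j).toLinearMap)

theorem dunklTerm_apply (i j : Fin N) (F : RatField N) :
    dunklTerm k S i j F = algebraMap ℂ (RatField N) k * (Xc i - Xc j)⁻¹ * (F - S i j F) :=
  rfl

def dunklSum (i : Fin N) : Module.End ℂ (RatField N) :=
  ∑ j ∈ Finset.univ.erase i, dunklTerm k S i j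

theorem dunklSum_apply (i : Fin N) (F : RatField N) :
    dunklSum k S i F = ∑ j ∈ Finset.univ.erase i, dunklTerm k S i j F :=
  LinearMap.sum_apply _ _ _

theorem Drat_eq (i : Fin N) (F : RatField N) :
    Drat hbar k pd S i F = algebraMap ℂ (RatField N) hbar * pd i F - dunklSum k S i F := by
  rw [dunklSum_apply]
  rfl

theorem Drat_sub (i : Fin N) (G H : RatField N) :
    Drat hbar k pd S i (G - H) = Drat hbar k pd S i G - Drat hbar k pd S i H := by
  simp only [Drat_eq, map_sub]
  ring

theorem Drat_sum {ι : Type*} (i : Fin N) (s : Finset ι) (f : ι → RatField N) :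
    Drat hbar k pd S i (∑ l ∈ s, f l) = ∑ l ∈ s, Drat hbar k pd S i (f l) := by
  simp only [Drat_eq, map_sum, Finset.mul_sum, Finset.sum_sub_distrib]

theorem Drat_algebraMap_mul (i : Fin N) (t : ℂ) (G : RatField N) :
    Drat hbar k pd S i (algebraMap ℂ (RatField N) t * G)
      = algebraMap ℂ (RatField N) t * Drat hbar k pd S i G := by
  simp only [Drat_eq, LinearMap.map_algebraMap_mul]
  ring

variable {k S} (hS : ∀ i j m : Fin N, S i j (Xc m) = Xc (swap i j m))
include hS

theorem S_dunklTerm (a b m l : Fin N) (F : RatField N) :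
    S a b (dunklTerm k S m l F) = dunklTerm k S (swap a b m) (swap a b l) (S a b F) := by
  simp only [dunklTerm_apply, map_mul, map_sub, AlgEquiv.commutes, S_inv_Xc_sub hS,
    S_S hS a b m l]

theorem S_dunklSum (a b m : Fin N) (F : RatField N) :
    S a b (dunklSum k S m F) = dunklSum k S (swap a b m) (S a b F) := by
  simp only [dunklSum_apply, map_sum, S_dunklTerm hS]
  exact Finset.sum_equiv (swap a b) (by simp [(swap a b).injective.ne_iff]) fun _ _ => rfl

end Rational

section Commute

variable {k : ℂ} {S : Fin N → Fin N → (RatField N ≃ₐ[ℂ] RatField N)}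
  (hS : ∀ i j m : Fin N, S i j (Xc m) = Xc (swap i j m))
include hS

theorem dunklTerm_swap_eq_neg (i j : Fin N) (F : RatField N) :
    dunklTerm k S j i F = -dunklTerm k S i j F := by
  rw [dunklTerm_apply, dunklTerm_apply, S_comm hS j i, inv_Xc_sub_comm j i]
  ring

theorem dunklTerm_dunklTerm_self (i j : Fin N) (F : RatField N) :
    dunklTerm k S i j (dunklTerm k S i j F) = 0 := by
  simp only [dunklTerm_apply, map_mul, map_sub, AlgEquiv.commutes, S_inv_Xc_sub hS,
    swap_apply_left, swap_apply_right, S_S_self hS]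
  rw [inv_Xc_sub_comm j i]
  ring

theorem dunklTerm_commute_of_disjoint {i j m l : Fin N} (hmi : m ≠ i) (hmj : m ≠ j)
    (hli : l ≠ i) (hlj : l ≠ j) (F : RatField N) :
    dunklTerm k S i j (dunklTerm k S m l F) = dunklTerm k S m l (dunklTerm k S i j F) := by
  simp only [dunklTerm_apply, map_mul, map_sub, AlgEquiv.commutes, S_inv_Xc_sub hS,
    S_S hS i j m l, swap_apply_of_ne_of_ne hmi hmj, swap_apply_of_ne_of_ne hli hlj,
    swap_apply_of_ne_of_ne hmi.symm hli.symm, swap_apply_of_ne_of_ne hmj.symm hlj.symm]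
  ring

theorem dunklTerm_commutator_triple {i m t : Fin N} (him : i ≠ m) (hti : t ≠ i)
    (htm : t ≠ m) (F : RatField N) :
    (dunklTerm k S i m (dunklTerm k S m t F) - dunklTerm k S m t (dunklTerm k S i m F))
      + (dunklTerm k S i t (dunklTerm k S m i F) - dunklTerm k S m i (dunklTerm k S i t F))
      + (dunklTerm k S i t (dunklTerm k S m t F) - dunklTerm k S m t (dunklTerm k S i t F))
      = 0 := by
  have e1 (G : RatField N) : S i t (S m i G) = S m t (S i t G) := by
    rw [S_S hS i t m i, swap_apply_of_ne_of_ne him.symm htm.symm, swap_apply_left]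
  have e3 (G : RatField N) : S i t (S m t G) = S m i (S i t G) := by
    rw [S_S hS i t m t, swap_apply_of_ne_of_ne him.symm htm.symm, swap_apply_right]
  have e5 (G : RatField N) : S m i (S m t G) = S i t (S m i G) := by
    rw [S_S hS m i m t, swap_apply_left, swap_apply_of_ne_of_ne htm hti]
  have e6 (G : RatField N) : S m t (S m i G) = S i t (S m t G) := by
    rw [S_S hS m t m i, swap_apply_left, swap_apply_of_ne_of_ne him hti.symm, S_comm hS t i]
  have hXc : (Xc i - Xc t)⁻¹ * (Xc m - Xc t)⁻¹ + (Xc m - Xc i)⁻¹ * (Xc m - Xc t)⁻¹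
      = (Xc i - Xc t)⁻¹ * (Xc m - Xc i)⁻¹ := by
    have := Xc_sub_Xc_ne_zero hti.symm
    have := Xc_sub_Xc_ne_zero him.symm
    have := Xc_sub_Xc_ne_zero htm.symm
    field_simp
    ring
  simp only [dunklTerm_apply, map_mul, map_sub, AlgEquiv.commutes, S_inv_Xc_sub hS,
    swap_apply_left, swap_apply_right, swap_apply_of_ne_of_ne him.symm htm.symm,
    swap_apply_of_ne_of_ne htm hti, swap_apply_of_ne_of_ne him hti.symm, S_comm hS i m,
    e1, e3, e5, e6]
  rw [inv_Xc_sub_comm i m]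
  linear_combination (algebraMap ℂ (RatField N) k * algebraMap ℂ (RatField N) k
    * (S m t (S i t F) - S m i (S i t F))) * hXc

theorem dunklSum_comm {i m : Fin N} (him : i ≠ m) (F : RatField N) :
    dunklSum k S i (dunklSum k S m F) = dunklSum k S m (dunklSum k S i F) := by
  set f : Fin N → Fin N → RatField N := fun j l =>
    dunklTerm k S i j (dunklTerm k S m l F) - dunklTerm k S m l (dunklTerm k S i j F)
  set U := (Finset.univ.erase i).erase m
  have hiU : i ∉ U := by simp [U]
  have hmU : m ∉ U := by simp [U]
  have erase_i : Finset.univ.erase i = insert m U :=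
    (Finset.insert_erase (by simpa using him.symm)).symm
  have erase_m : Finset.univ.erase m = insert i U := by
    rw [show U = (Finset.univ.erase m).erase i from Finset.erase_right_comm]
    exact (Finset.insert_erase (by simpa using him)).symm
  have row (t : Fin N) (ht : t ∈ U) : ∑ l ∈ insert i U, f t l = f t i + f t t := by
    simp only [U, Finset.mem_erase] at ht
    rw [Finset.sum_insert hiU, Finset.sum_eq_single_of_mem t (by simp [U, ht])]
    intro l hl hlt
    simp only [U, Finset.mem_erase] at hl
    exact sub_eq_zero.mpr (dunklTerm_commute_of_disjoint hS him.symm ht.1.symm hl.2.1 hlt F)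
  have corner : f m i = 0 := by
    simp only [f, dunklTerm_swap_eq_neg hS m i, map_neg, dunklTerm_dunklTerm_self hS, neg_zero,
      sub_zero]
  rw [← sub_eq_zero]
  calc _ = ∑ j ∈ insert m U, ∑ l ∈ insert i U, f j l := by
        simp only [f, dunklSum_apply, map_sum, Finset.sum_sub_distrib, ← erase_i, ← erase_m]
        rw [Finset.sum_comm (s := Finset.univ.erase m)]
    _ = ∑ t ∈ U, (f m t + f t i + f t t) := by
        rw [Finset.sum_insert hmU, Finset.sum_insert hiU, corner, Finset.sum_congr rfl row,
          zero_add, ← Finset.sum_add_distrib]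
        simp only [add_assoc]
    _ = 0 := Finset.sum_eq_zero fun t ht => by
        simp only [U, Finset.mem_erase] at ht
        exact dunklTerm_commutator_triple hS him ht.2.1 ht.1 F

theorem dunklTerm_Xc_mul (i j m : Fin N) (G : RatField N) :
    dunklTerm k S i j (Xc m * G) = Xc m * dunklTerm k S i j G
      + algebraMap ℂ (RatField N) k * (Xc i - Xc j)⁻¹ * (Xc m - Xc (swap i j m))
        * S i j G := by
  rw [dunklTerm_apply, dunklTerm_apply, map_mul, hS]
  ring

theorem dunklSum_Xc_mul {i m : Fin N} (him : i ≠ m) (G : RatField N) :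
    dunklSum k S i (Xc m * G)
      = Xc m * dunklSum k S i G - algebraMap ℂ (RatField N) k * S i m G := by
  have hm : m ∈ Finset.univ.erase i := by simpa using him.symm
  have h : (Xc i - Xc m)⁻¹ * (Xc m - Xc i) = -1 := by
    rw [inv_Xc_sub_comm, neg_mul, inv_mul_cancel₀ (Xc_sub_Xc_ne_zero him.symm)]
  have only_m : ∑ j ∈ Finset.univ.erase i, algebraMap ℂ (RatField N) k * (Xc i - Xc j)⁻¹
      * (Xc m - Xc (swap i j m)) * S i j G = -(algebraMap ℂ (RatField N) k * S i m G) := by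
    rw [Finset.sum_eq_single_of_mem m hm fun j _ hjm => by
      rw [swap_apply_of_ne_of_ne him.symm hjm.symm, sub_self, mul_zero, zero_mul],
      swap_apply_right]
    linear_combination (algebraMap ℂ (RatField N) k * S i m G) * h
  simp only [dunklSum_apply, dunklTerm_Xc_mul hS, Finset.sum_add_distrib, ← Finset.mul_sum,
    only_m]
  ring

end Commute

section RationalCommute

variable {hbar k : ℂ} {pd : Fin N → (RatField N →ₗ[ℂ] RatField N)}
  {S : Fin N → Fin N → (RatField N ≃ₐ[ℂ] RatField N)}
  (hLeib : ∀ i, ∀ a b : RatField N, pd i (a * b) = a * pd i b + pd i a * b)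
  (hpdX : ∀ i j : Fin N, pd i (Xc j) = if i = j then 1 else 0)
  (hS : ∀ i j m : Fin N, S i j (Xc m) = Xc (swap i j m))

include hLeib hpdX hS

theorem S_Drat (a b l : Fin N) (F : RatField N) :
    S a b (Drat hbar k pd S l F) = Drat hbar k pd S (swap a b l) (S a b F) := by
  rw [Drat_eq, Drat_eq, map_sub, map_mul, AlgEquiv.commutes, S_pd hLeib hpdX hS,
    S_dunklSum hS]

theorem Drat_Xc_mul {i m : Fin N} (him : i ≠ m) (G : RatField N) :
    Drat hbar k pd S i (Xc m * G)
      = Xc m * Drat hbar k pd S i G + algebraMap ℂ (RatField N) k * S i m G := by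
  rw [Drat_eq, Drat_eq, hLeib, hpdX, if_neg him, zero_mul, add_zero, dunklSum_Xc_mul hS him]
  ring

theorem pd_S (a b l : Fin N) (F : RatField N) : pd l (S a b F) = S a b (pd (swap a b l) F) := by
  rw [S_pd hLeib hpdX hS, swap_apply_self]

theorem pd_dunklTerm_of_ne {i m l : Fin N} (him : i ≠ m) (hil : i ≠ l) (F : RatField N) :
    pd i (dunklTerm k S m l F) = dunklTerm k S m l (pd i F) := by
  rw [dunklTerm_apply, dunklTerm_apply, mul_assoc, LinearMap.map_algebraMap_mul, hLeib, map_sub,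
    pd_S hLeib hpdX hS, swap_apply_of_ne_of_ne him hil, pd_inv hLeib, map_sub, hpdX, hpdX,
    if_neg him, if_neg hil]
  ring

theorem pd_dunklSum_sub {i m : Fin N} (him : i ≠ m) (F : RatField N) :
    pd i (dunklSum k S m F) - dunklSum k S m (pd i F)
      = pd i (dunklTerm k S m i F) - dunklTerm k S m i (pd i F) := by
  rw [dunklSum_apply, dunklSum_apply, map_sum, ← Finset.sum_sub_distrib]
  refine Finset.sum_eq_single_of_mem i (by simpa using him) fun l _ hli => ?_
  rw [pd_dunklTerm_of_ne hLeib hpdX hS him hli.symm, sub_self]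

theorem pd_dunklTerm_sub_symm {i m : Fin N} (him : i ≠ m) (F : RatField N) :
    pd i (dunklTerm k S m i F) - dunklTerm k S m i (pd i F)
      = pd m (dunklTerm k S i m F) - dunklTerm k S i m (pd m F) := by
  simp only [dunklTerm_apply, hLeib, pd_algebraMap hLeib, map_sub, pd_S hLeib hpdX hS,
    swap_apply_right, pd_inv hLeib, hpdX, if_neg him, if_neg him.symm, if_pos]
  rw [S_comm hS m i, inv_Xc_sub_comm m i]
  ring

theorem Drat_comm (i m : Fin N) (F : RatField N) :
    Drat hbar k pd S i (Drat hbar k pd S m F) = Drat hbar k pd S m (Drat hbar k pd S i F) := by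
  rcases eq_or_ne i m with rfl | him
  · rfl
  have expand (a b : Fin N) : Drat hbar k pd S a (Drat hbar k pd S b F)
      = algebraMap ℂ (RatField N) hbar * (algebraMap ℂ (RatField N) hbar * pd a (pd b F))
        - algebraMap ℂ (RatField N) hbar * pd a (dunklSum k S b F)
        - algebraMap ℂ (RatField N) hbar * dunklSum k S a (pd b F)
        + dunklSum k S a (dunklSum k S b F) := by
    rw [Drat_eq _ _ _ _ b, Drat_eq, map_sub, map_sub, LinearMap.map_algebraMap_mul,
      LinearMap.map_algebraMap_mul]
    ring
  rw [expand, expand, pd_pd_comm hLeib hpdX i m, dunklSum_comm hS him]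
  linear_combination -algebraMap ℂ (RatField N) hbar * (pd_dunklSum_sub hLeib hpdX hS him F
    - pd_dunklSum_sub hLeib hpdX hS him.symm F + pd_dunklTerm_sub_symm hLeib hpdX hS him F)

end RationalCommute

section Trigonometric

variable (k : ℂ) (S : Fin N → Fin N → (RatField N ≃ₐ[ℂ] RatField N))

def jucysMurphy (i : Fin N) : Module.End ℂ (RatField N) :=
  ∑ j ∈ Finset.univ.filter (fun j => j < i),
    LinearMap.mulLeft ℂ (algebraMap ℂ (RatField N) k) ∘ₗ (S i j).toLinearMap

theorem jucysMurphy_apply (i : Fin N) (F : RatField N) :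
    jucysMurphy k S i F
      = ∑ j ∈ Finset.univ.filter (fun j => j < i), algebraMap ℂ (RatField N) k * S i j F :=
  LinearMap.sum_apply _ _ _

theorem Dtrig_eq (hbar : ℂ) (pd : Fin N → (RatField N →ₗ[ℂ] RatField N)) (i : Fin N)
    (F : RatField N) :
    Dtrig hbar k pd S i F = Xc i * Drat hbar k pd S i F - jucysMurphy k S i F := by
  rw [jucysMurphy_apply]
  rfl

variable {k S} {hbar : ℂ} {pd : Fin N → (RatField N →ₗ[ℂ] RatField N)}
  (hLeib : ∀ i, ∀ a b : RatField N, pd i (a * b) = a * pd i b + pd i a * b)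
  (hpdX : ∀ i j : Fin N, pd i (Xc j) = if i = j then 1 else 0)
  (hS : ∀ i j m : Fin N, S i j (Xc m) = Xc (swap i j m))
include hS

theorem jucysMurphy_comm {i m : Fin N} (hlt : i < m) (F : RatField N) :
    jucysMurphy k S i (jucysMurphy k S m F) = jucysMurphy k S m (jucysMurphy k S i F) := by
  simp only [jucysMurphy_apply, map_sum, map_mul, AlgEquiv.commutes]
  rw [Finset.sum_comm (s := Finset.univ.filter fun l => l < m)]
  refine Finset.sum_congr rfl fun j hj => ?_
  have hji : j < i := (Finset.mem_filter.mp hj).2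
  -- conjugation by `s_ij` permutes the transpositions `s_ml`, `l < m`, since `i, j < m`
  refine Finset.sum_equiv (swap i j) (fun l => ?_) fun l _ => ?_
  · simp only [Finset.mem_filter, Finset.mem_univ, true_and]
    rcases eq_or_ne l i with rfl | hli
    · simp [hlt, hji.trans hlt]
    rcases eq_or_ne l j with rfl | hlj
    · simp [hlt, hji.trans hlt]
    rw [swap_apply_of_ne_of_ne hli hlj]
  · rw [S_S hS i j m l, swap_apply_of_ne_of_ne hlt.ne' (hji.trans hlt).ne']

include hLeib hpdX

theorem S_Xc_mul_Drat (a b l : Fin N) (F : RatField N) :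
    S a b (Xc l * Drat hbar k pd S l F)
      = Xc (swap a b l) * Drat hbar k pd S (swap a b l) (S a b F) := by
  rw [map_mul, hS, S_Drat hLeib hpdX hS]

theorem Xc_mul_Drat_commutator {i m : Fin N} (him : i ≠ m) (F : RatField N) :
    Xc i * Drat hbar k pd S i (Xc m * Drat hbar k pd S m F)
      - Xc m * Drat hbar k pd S m (Xc i * Drat hbar k pd S i F)
    = algebraMap ℂ (RatField N) k * (Xc i * Drat hbar k pd S i (S i m F)
      - Xc m * Drat hbar k pd S m (S i m F)) := by
  rw [Drat_Xc_mul hLeib hpdX hS him, Drat_Xc_mul hLeib hpdX hS him.symm,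
    Drat_comm hLeib hpdX hS i m, S_Drat hLeib hpdX hS, S_Drat hLeib hpdX hS,
    swap_apply_right, swap_apply_right, S_comm hS m i]
  ring

theorem Xc_mul_Drat_jucysMurphy_commutator {i m : Fin N} (hlt : i < m) (F : RatField N) :
    Xc i * Drat hbar k pd S i (jucysMurphy k S m F)
      - jucysMurphy k S m (Xc i * Drat hbar k pd S i F)
    = algebraMap ℂ (RatField N) k * (Xc i * Drat hbar k pd S i (S i m F)
      - Xc m * Drat hbar k pd S m (S i m F)) := by
  have hi : i ∈ Finset.univ.filter (fun j => j < m) := by simpa using hlt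
  simp only [jucysMurphy_apply, Drat_sum, Drat_algebraMap_mul, Finset.mul_sum,
    ← Finset.sum_sub_distrib, S_Xc_mul_Drat hLeib hpdX hS]
  rw [Finset.sum_eq_single_of_mem i hi fun j _ hji => by
    rw [swap_apply_of_ne_of_ne hlt.ne hji.symm]; ring, swap_apply_right, S_comm hS m i]
  ring

theorem jucysMurphy_comm_Xc_mul_Drat {i m : Fin N} (hlt : i < m) (F : RatField N) :
    jucysMurphy k S i (Xc m * Drat hbar k pd S m F)
      = Xc m * Drat hbar k pd S m (jucysMurphy k S i F) := by
  simp only [jucysMurphy_apply, Drat_sum, Drat_algebraMap_mul, Finset.mul_sum,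
    S_Xc_mul_Drat hLeib hpdX hS]
  refine Finset.sum_congr rfl fun j hj => ?_
  rw [swap_apply_of_ne_of_ne hlt.ne' ((Finset.mem_filter.mp hj).2.trans hlt).ne']
  ring

theorem Dtrig_comm_of_lt {i m : Fin N} (hlt : i < m) (F : RatField N) :
    Dtrig hbar k pd S i (Dtrig hbar k pd S m F) = Dtrig hbar k pd S m (Dtrig hbar k pd S i F) := by
  simp only [Dtrig_eq, Drat_sub, map_sub]
  linear_combination Xc_mul_Drat_commutator hLeib hpdX hS hlt.ne F
    - Xc_mul_Drat_jucysMurphy_commutator hLeib hpdX hS hlt F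
    - jucysMurphy_comm_Xc_mul_Drat hLeib hpdX hS hlt F + jucysMurphy_comm hS hlt F

end Trigonometric

end Dunkl

theorem statement5 (hbar k : ℂ)
    (pd : Fin N → (RatField N →ₗ[ℂ] RatField N))
    (hLeib : ∀ i, ∀ a b : RatField N, pd i (a * b) = a * pd i b + pd i a * b)
    (hpdX : ∀ i j : Fin N, pd i (Xc j) = if i = j then 1 else 0)
    (S : Fin N → Fin N → (RatField N ≃ₐ[ℂ] RatField N))
    (hS : ∀ i j m : Fin N, S i j (Xc m) = Xc (Equiv.swap i j m)) :
    ∀ i m : Fin N, ∀ F : RatField N,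
      Dtrig hbar k pd S i (Dtrig hbar k pd S m F) = Dtrig hbar k pd S m (Dtrig hbar k pd S i F) := by
  intro i m F
  rcases lt_trichotomy i m with hlt | rfl | hgt
  · exact Dunkl.Dtrig_comm_of_lt hLeib hpdX hS hlt F
  · rfl
  · exact (Dunkl.Dtrig_comm_of_lt hLeib hpdX hS hgt F).symm

end
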